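/- arXiv:0808.1992 — 2 statements merged into one kernel-verified Lean document; each statement's English description precedes it below -/
import Mathlib

section
/- For a definite matrix A and any subeigenvector y ∈ V*(A), every critical edge (i,j) satisfies a_ij y_j = y_i. -/
open Finset

/-- Max-times matrix product: `(A ⊗ B) i j = max_k (A i k * B k j)`. -/
noncomputable def mProd {n : ℕ} (A B : Matrix (Fin n) (Fin n) NNReal) :
    Matrix (Fin n) (Fin n) NNReal :=
  fun i j => univ.sup fun k => A i k * B k j

/-- Max-algebraic matrix powers, `mPow A 0 = I`. -/
noncomputable def mPow {n : ℕ} (A : Matrix (Fin n) (Fin n) NNReal) :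
    ℕ → Matrix (Fin n) (Fin n) NNReal
  | 0 => fun i j => if i = j then 1 else 0
  | k + 1 => mProd (mPow A k) A

/-- Kleene star `A* = I ⊕ A ⊕ ... ⊕ A^{n-1}` in max algebra. -/
noncomputable def klStar {n : ℕ} (A : Matrix (Fin n) (Fin n) NNReal) :
    Matrix (Fin n) (Fin n) NNReal :=
  fun i j => (Finset.range n).sup fun k => mPow A k i j

/-- Partial "sums" `I ⊕ A ⊕ ... ⊕ A^m` of the Kleene star series. -/
noncomputable def kPartial {n : ℕ} (A : Matrix (Fin n) (Fin n) NNReal) (m : ℕ) :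
    Matrix (Fin n) (Fin n) NNReal :=
  fun i j => (Finset.range (m + 1)).sup fun k => mPow A k i j

/-- The weight of the cycle given by the list `l` (with wrap-around edge). -/
def cycleWeight {n : ℕ} (A : Matrix (Fin n) (Fin n) NNReal) (l : List (Fin n)) : NNReal :=
  ((l.zip (l.rotate 1)).map fun p => A p.1 p.2).prod

/-- The geometric mean of a cycle: `w(σ,A)^{1/k}`. -/
noncomputable def cycleMean {n : ℕ} (A : Matrix (Fin n) (Fin n) NNReal) (l : List (Fin n)) :
    NNReal :=
  (cycleWeight A l) ^ ((l.length : ℝ)⁻¹)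

/-- The maximum cycle geometric mean `λ(A)`. -/
noncomputable def maxCycleMean {n : ℕ} (A : Matrix (Fin n) (Fin n) NNReal) : NNReal :=
  sSup {x | ∃ l : List (Fin n), l ≠ [] ∧ x = cycleMean A l}

/-- `(i,j)` is a critical edge: it lies on a cycle attaining `λ(A)`. -/
def criticalEdge {n : ℕ} (A : Matrix (Fin n) (Fin n) NNReal) (i j : Fin n) : Prop :=
  ∃ l : List (Fin n), l ≠ [] ∧ cycleMean A l = maxCycleMean A ∧ (i, j) ∈ l.zip (l.rotate 1)

/-- Max-algebraic matrix-vector product. -/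
noncomputable def mVec {n : ℕ} (A : Matrix (Fin n) (Fin n) NNReal) (x : Fin n → NNReal) :
    Fin n → NNReal :=
  fun i => univ.sup fun j => A i j * x j

/-!
Rotate the critical cycle so that it starts with the edge `(i, j)`. Its weight is `1`, so
`a_ij · w = 1` where `w` is the weight of the remaining walk from `j` back to `i`. Chaining
`a_kl y_l ≤ y_k` along that walk gives `w · y_i ≤ y_j`, hence
`y_i = a_ij · w · y_i ≤ a_ij · y_j ≤ y_i`.
-/

namespace List

theorem zip_rotate_rotate_one {α : Type*} (l : List α) (k : ℕ) :
    (l.rotate k).zip ((l.rotate k).rotate 1) = (l.zip (l.rotate 1)).rotate k := by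
  rw [rotate_rotate, add_comm, ← rotate_rotate, zip,
    zipWith_rotate_distrib _ _ _ _ (length_rotate l 1).symm]

theorem exists_rotate_eq_cons_of_mem_zip_rotate_one {α : Type*} {l : List α} {a b : α}
    (h : (a, b) ∈ l.zip (l.rotate 1)) :
    ∃ k r s, l.rotate k = a :: r ∧ r ++ [a] = b :: s := by
  obtain ⟨k, hk, hkab⟩ := mem_iff_getElem.mp h
  have hfirst : ((l.rotate k).zip ((l.rotate k).rotate 1))[0]? = some (a, b) := by
    rw [zip_rotate_rotate_one, getElem?_rotate (by omega), zero_add, Nat.mod_eq_of_lt hk,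
      getElem?_eq_getElem hk, hkab]
  cases hrot : l.rotate k with
  | nil => simp [hrot] at hfirst
  | cons c r =>
    obtain ⟨d, s, hds⟩ : ∃ d s, r ++ [c] = d :: s :=
      ⟨(r ++ [c]).head (by simp), (r ++ [c]).tail, (cons_head_tail _).symm⟩
    rw [hrot, rotate_cons_succ, rotate_zero, hds, zip_cons_cons, getElem?_cons_zero,
      Option.some_inj, Prod.mk.injEq] at hfirst
    obtain ⟨rfl, rfl⟩ := hfirst
    exact ⟨k, r, s, hrot, hds⟩

end List

def walkWeight {ι R : Type*} [Monoid R] (A : ι → ι → R) : ι → List ι → R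
  | _, [] => 1
  | v, w :: l => A v w * walkWeight A w l

theorem walkWeight_append_singleton {ι R : Type*} [Monoid R] (A : ι → ι → R) (w : ι) :
    ∀ (v : ι) (l : List ι),
      walkWeight A v (l ++ [w]) = (((v :: l).zip (l ++ [w])).map fun p => A p.1 p.2).prod
  | _, [] => by simp [walkWeight]
  | v, u :: l => by
    simp [walkWeight, walkWeight_append_singleton A w u l]

theorem walkWeight_mul_le {ι R : Type*} [Monoid R] [Preorder R] [MulLeftMono R]
    (A : ι → ι → R) (y : ι → R) (hy : ∀ v w, A v w * y w ≤ y v) :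
    ∀ (v : ι) (l : List ι), walkWeight A v l * y ((v :: l).getLast (List.cons_ne_nil v l)) ≤ y v
  | _, [] => by simp [walkWeight]
  | v, w :: l => by
    rw [walkWeight, mul_assoc, List.getLast_cons (List.cons_ne_nil w l)]
    exact (mul_le_mul_right (walkWeight_mul_le A y hy w l) _).trans (hy v w)

theorem cycleWeight_cons {n : ℕ} (A : Matrix (Fin n) (Fin n) NNReal) (v : Fin n)
    (l : List (Fin n)) : cycleWeight A (v :: l) = walkWeight A v (l ++ [v]) := by
  rw [cycleWeight, List.rotate_cons_succ, List.rotate_zero]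
  exact (walkWeight_append_singleton A v v l).symm

theorem cycleWeight_rotate {n : ℕ} (A : Matrix (Fin n) (Fin n) NNReal) (l : List (Fin n))
    (k : ℕ) : cycleWeight A (l.rotate k) = cycleWeight A l := by
  rw [cycleWeight, cycleWeight, List.zip_rotate_rotate_one]
  exact ((List.rotate_perm _ k).map _).prod_eq

theorem cycleWeight_eq_one_of_cycleMean_eq_one {n : ℕ} {A : Matrix (Fin n) (Fin n) NNReal}
    {l : List (Fin n)} (h : cycleMean A l = 1) : cycleWeight A l = 1 := by
  obtain rfl | hl := eq_or_ne l []
  · rfl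
  · rwa [cycleMean, NNReal.rpow_inv_eq_iff (by simpa using hl), NNReal.one_rpow] at h

/-- for definite `A`, every subeigenvector satisfies
`a_ij y_j = y_i` on critical edges. -/
theorem stmt_10 {n : ℕ} (A : Matrix (Fin n) (Fin n) NNReal)
    (hdef : maxCycleMean A = 1) (y : Fin n → NNReal)
    (hy : ∀ i, mVec A y i ≤ y i) (i j : Fin n) (hij : criticalEdge A i j) :
    A i j * y j = y i := by
  obtain ⟨l, -, hmean, hmem⟩ := hij
  have hedge : ∀ v w, A v w * y w ≤ y v := fun v w =>
    (Finset.le_sup (f := fun k => A v k * y k) (Finset.mem_univ w)).trans (hy v)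
  obtain ⟨k, r, s, hrot, hs⟩ := List.exists_rotate_eq_cons_of_mem_zip_rotate_one hmem
  have hcycle : A i j * walkWeight A j s = 1 := by
    rw [← cycleWeight_eq_one_of_cycleMean_eq_one (hmean.trans hdef), ← cycleWeight_rotate A l k,
      hrot, cycleWeight_cons, hs]
    rfl
  have hwalk : walkWeight A j s * y i ≤ y j := by
    simpa [← hs] using walkWeight_mul_le A y hedge j s
  refine le_antisymm (hedge i j) ?_
  calc y i = A i j * walkWeight A j s * y i := by rw [hcycle, one_mul]
    _ ≤ A i j * y j := by rw [mul_assoc]; exact mul_le_mul_right hwalk _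
end

section
/- Let A be definite. For any edge (i,j), the following are equivalent: (i,j) is a critical edge of A; a_ij·(A*)_jk = (A*)_ik for all k; (A*)_kj = (A*)_ki·a_ij for all k. -/
open Finset

/-!
Under `λ(A) ≤ 1` every cycle has weight at most `1`, so removing a cycle from a walk never
decreases its weight. Hence `a*_ik` is the maximal weight of a walk from `i` to `k` (walks of
length `≥ n` revisit a vertex), which makes `A*` multiplicatively transitive with unit diagonal.
For definite `A`, an edge `(i,j)` is then critical exactly when `a_ij a*_ji = 1`: a critical cycle
through `(i,j)` is the edge followed by a walk from `j` back to `i`, and conversely. Both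
identities of the theorem are equivalent to `a_ij a*_ji = 1`: taking `k = i` (resp. `k = j`) gives
it, and it gives `a*_ik ≤ a_ij a*_ji a*_ik ≤ a_ij a*_jk ≤ a*_ik`.
-/

theorem List.rotate_zip_rotate_one {α : Type*} (l : List α) (k : ℕ) :
    (l.zip (l.rotate 1)).rotate k = (l.rotate k).zip ((l.rotate k).rotate 1) := by
  rw [List.zip_eq_zipWith, List.zipWith_rotate_distrib _ _ _ _ (List.length_rotate _ _).symm,
    List.rotate_rotate, List.rotate_rotate, add_comm, List.zip_eq_zipWith]

theorem List.getLastD_append {α : Type*} (l₁ l₂ : List α) (d : α) :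
    (l₁ ++ l₂).getLastD d = l₂.getLastD (l₁.getLastD d) := by
  simp [List.getLastD_eq_getLast?, List.getLast?_append]

namespace MaxTimes

variable {n : ℕ} (A : Matrix (Fin n) (Fin n) NNReal)

/-- A walk from `i` is encoded as the vertex list `i :: l`; it ends at `l.getLastD i`. -/
def walkWeight : List (Fin n) → NNReal
  | [] => 1
  | [_] => 1
  | a :: b :: t => A a b * walkWeight (b :: t)

variable {A}

@[simp]
theorem walkWeight_singleton (i : Fin n) : walkWeight A [i] = 1 := rfl

@[simp]
theorem walkWeight_cons_cons (a b : Fin n) (t : List (Fin n)) :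
    walkWeight A (a :: b :: t) = A a b * walkWeight A (b :: t) := rfl

theorem walkWeight_append {i u : Fin n} {l₁ : List (Fin n)} (h : l₁.getLastD i = u)
    (l₂ : List (Fin n)) :
    walkWeight A (i :: (l₁ ++ l₂)) = walkWeight A (i :: l₁) * walkWeight A (u :: l₂) := by
  induction l₁ generalizing i with
  | nil => subst h; simp
  | cons b t ih => simp [ih (List.getLastD_cons ▸ h), mul_assoc]

theorem walkWeight_concat (i k : Fin n) (l : List (Fin n)) :
    walkWeight A (i :: (l ++ [k])) = walkWeight A (i :: l) * A (l.getLastD i) k := by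
  simp [walkWeight_append rfl]

theorem cycleWeight_cons (v : Fin n) (t : List (Fin n)) :
    cycleWeight A (v :: t) = walkWeight A (v :: (t ++ [v])) := by
  suffices ∀ u, (((u :: t).zip (t ++ [v])).map fun p => A p.1 p.2).prod
      = walkWeight A (u :: (t ++ [v])) by simpa [cycleWeight] using this v
  induction t with
  | nil => simp
  | cons b s ih => intro u; simp [ih]

theorem cycleWeight_rotate (l : List (Fin n)) (k : ℕ) :
    cycleWeight A (l.rotate k) = cycleWeight A l := by
  rw [cycleWeight, cycleWeight, ← List.rotate_zip_rotate_one, List.map_rotate]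
  exact (List.rotate_perm _ _).prod_eq

theorem exists_cycleWeight_eq_mul_walkWeight {l : List (Fin n)} {i j : Fin n}
    (h : (i, j) ∈ l.zip (l.rotate 1)) :
    ∃ t : List (Fin n), t.getLastD j = i ∧ cycleWeight A l = A i j * walkWeight A (j :: t) := by
  obtain ⟨s, u, hsu⟩ := List.append_of_mem h
  have hzip : (l.rotate s.length).zip ((l.rotate s.length).rotate 1) = (i, j) :: (u ++ s) := by
    rw [← List.rotate_zip_rotate_one, hsu, List.rotate_append_length_eq, List.cons_append]
  rw [← cycleWeight_rotate l s.length]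
  generalize l.rotate s.length = l' at hzip ⊢
  obtain _ | ⟨v, w⟩ := l'
  · simp at hzip
  obtain ⟨j', t, hjt⟩ := List.exists_cons_of_ne_nil (by simp : w ++ [v] ≠ [])
  rw [List.rotate_cons_succ, List.rotate_zero, hjt, List.zip_cons_cons, List.cons.injEq,
    Prod.mk.injEq] at hzip
  obtain ⟨⟨rfl, rfl⟩, -⟩ := hzip
  refine ⟨t, ?_, by rw [cycleWeight_cons, hjt, walkWeight_cons_cons]⟩
  rw [← List.getLastD_cons (a := v), ← hjt, List.getLastD_concat]

theorem walkWeight_le_mPow (i : Fin n) (l : List (Fin n)) :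
    walkWeight A (i :: l) ≤ mPow A l.length i (l.getLastD i) := by
  induction l using List.reverseRecOn with
  | nil => simp [mPow]
  | append_singleton l k ih =>
    rw [walkWeight_concat, List.getLastD_concat, List.length_append, List.length_singleton]
    calc walkWeight A (i :: l) * A (l.getLastD i) k
        ≤ mPow A l.length i (l.getLastD i) * A (l.getLastD i) k := by gcongr
      _ ≤ mPow A (l.length + 1) i k :=
        Finset.le_sup (f := fun c => mPow A l.length i c * A c k) (Finset.mem_univ _)

theorem exists_walkWeight_eq_mPow {m : ℕ} {i k : Fin n} (h : mPow A m i k ≠ 0) :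
    ∃ l : List (Fin n), l.length = m ∧ l.getLastD i = k ∧
      walkWeight A (i :: l) = mPow A m i k := by
  induction m generalizing k with
  | zero =>
    obtain rfl : i = k := by by_contra hik; simp [mPow, hik] at h
    exact ⟨[], rfl, rfl, by simp [mPow]⟩
  | succ m ih =>
    obtain ⟨c, -, hc⟩ := Finset.exists_mem_eq_sup Finset.univ ⟨i, Finset.mem_univ i⟩
      (fun c => mPow A m i c * A c k)
    change mPow A (m + 1) i k = _ at hc
    obtain ⟨l, hlen, hlast, hw⟩ := ih (left_ne_zero_of_mul (hc ▸ h))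
    refine ⟨l ++ [k], by simp [hlen], List.getLastD_concat, ?_⟩
    rw [walkWeight_concat, hlast, hw, hc]

theorem mPow_le_klStar {m : ℕ} (hm : m < n) (i k : Fin n) : mPow A m i k ≤ klStar A i k :=
  Finset.le_sup (f := fun m => mPow A m i k) (Finset.mem_range.2 hm)

theorem exists_walkWeight_eq_klStar {i k : Fin n} (h : klStar A i k ≠ 0) :
    ∃ l : List (Fin n), l.getLastD i = k ∧ walkWeight A (i :: l) = klStar A i k := by
  obtain ⟨m, -, hm⟩ := Finset.exists_mem_eq_sup (Finset.range n)
    ⟨0, Finset.mem_range.2 i.pos⟩ (fun m => mPow A m i k)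
  change klStar A i k = _ at hm
  obtain ⟨l, -, hlast, hw⟩ := exists_walkWeight_eq_mPow (hm ▸ h)
  exact ⟨l, hlast, hw.trans hm.symm⟩

theorem cycleMean_rpow_length {l : List (Fin n)} (hl : l ≠ []) :
    cycleMean A l ^ (l.length : ℝ) = cycleWeight A l :=
  NNReal.rpow_inv_rpow (by simpa using hl) _

theorem cycleMean_le_iff {l : List (Fin n)} (hl : l ≠ []) {x : NNReal} :
    cycleMean A l ≤ x ↔ cycleWeight A l ≤ x ^ (l.length : ℝ) :=
  NNReal.rpow_inv_le_iff (by simpa [List.length_pos_iff] using hl)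

theorem bddAbove_cycleMeans :
    BddAbove {x | ∃ l : List (Fin n), l ≠ [] ∧ x = cycleMean A l} := by
  refine ⟨Finset.univ.sup fun p : Fin n × Fin n => A p.1 p.2, ?_⟩
  rintro x ⟨l, hl, rfl⟩
  rw [cycleMean_le_iff hl, NNReal.rpow_natCast, cycleWeight]
  have := List.prod_le_pow_card ((l.zip (l.rotate 1)).map fun p => A p.1 p.2)
    (Finset.univ.sup fun p : Fin n × Fin n => A p.1 p.2) (by
      simp only [List.mem_map]
      rintro _ ⟨p, -, rfl⟩
      exact Finset.le_sup (f := fun p : Fin n × Fin n => A p.1 p.2) (Finset.mem_univ p))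
  simpa using this

theorem cycleWeight_le_one (hA : maxCycleMean A ≤ 1) {l : List (Fin n)} (hl : l ≠ []) :
    cycleWeight A l ≤ 1 := by
  rw [← NNReal.one_rpow l.length, ← cycleMean_le_iff hl]
  exact (le_csSup bddAbove_cycleMeans ⟨l, hl, rfl⟩).trans hA

theorem walkWeight_le_one_of_getLastD_eq (hA : maxCycleMean A ≤ 1) {i : Fin n}
    {l : List (Fin n)} (h : l.getLastD i = i) : walkWeight A (i :: l) ≤ 1 := by
  obtain rfl | ⟨t, c, rfl⟩ := l.eq_nil_or_concat
  · simp
  rw [List.concat_eq_append, List.getLastD_concat] at h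
  rw [List.concat_eq_append, h, ← cycleWeight_cons]
  exact cycleWeight_le_one hA (List.cons_ne_nil i t)

theorem walkWeight_cons_append_cons_le (hA : maxCycleMean A ≤ 1) (i : Fin n)
    (s r : List (Fin n)) : walkWeight A (i :: (s ++ i :: r)) ≤ walkWeight A (i :: r) := by
  rw [show s ++ i :: r = (s ++ [i]) ++ r by simp, walkWeight_append List.getLastD_concat]
  exact mul_le_of_le_one_left' (walkWeight_le_one_of_getLastD_eq hA List.getLastD_concat)

theorem exists_shorter_walk (hA : maxCycleMean A ≤ 1) {i : Fin n} {l : List (Fin n)}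
    (h : ¬ (i :: l).Nodup) :
    ∃ l' : List (Fin n), l'.length < l.length ∧ l'.getLastD i = l.getLastD i ∧
      walkWeight A (i :: l) ≤ walkWeight A (i :: l') := by
  induction l generalizing i with
  | nil => simp at h
  | cons b t ih =>
    by_cases hi : i ∈ b :: t
    · obtain ⟨s, r, hsr⟩ := List.append_of_mem hi
      rw [hsr]
      refine ⟨r, by simp; omega, by rw [List.getLastD_append, List.getLastD_cons], ?_⟩
      exact walkWeight_cons_append_cons_le hA i s r
    · obtain ⟨t', hlen, hlast, hw⟩ := ih fun hnd => h (List.nodup_cons.2 ⟨hi, hnd⟩)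
      refine ⟨b :: t', by simpa using hlen, by simpa only [List.getLastD_cons] using hlast, ?_⟩
      simp only [walkWeight_cons_cons]
      gcongr

theorem walkWeight_le_klStar (hA : maxCycleMean A ≤ 1) (i : Fin n) (l : List (Fin n)) :
    walkWeight A (i :: l) ≤ klStar A i (l.getLastD i) := by
  by_cases hnd : (i :: l).Nodup
  · have hlen : l.length < n := by simpa using hnd.length_le_card
    exact (walkWeight_le_mPow i l).trans (mPow_le_klStar hlen i _)
  obtain ⟨l', hlen, hlast, hw⟩ := exists_shorter_walk hA hnd
  exact hlast ▸ hw.trans (walkWeight_le_klStar hA i l')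
termination_by l.length

theorem klStar_self (hA : maxCycleMean A ≤ 1) (i : Fin n) : klStar A i i = 1 := by
  refine le_antisymm ?_ (by simpa [mPow] using mPow_le_klStar (A := A) i.pos i i)
  by_cases h : klStar A i i = 0
  · simp [h]
  obtain ⟨l, hlast, hw⟩ := exists_walkWeight_eq_klStar h
  exact hw ▸ walkWeight_le_one_of_getLastD_eq hA hlast

theorem klStar_mul_klStar_le (hA : maxCycleMean A ≤ 1) (i u k : Fin n) :
    klStar A i u * klStar A u k ≤ klStar A i k := by
  by_cases h₁ : klStar A i u = 0
  · simp [h₁]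
  by_cases h₂ : klStar A u k = 0
  · simp [h₂]
  obtain ⟨l₁, hl₁, hw₁⟩ := exists_walkWeight_eq_klStar h₁
  obtain ⟨l₂, hl₂, hw₂⟩ := exists_walkWeight_eq_klStar h₂
  calc klStar A i u * klStar A u k = walkWeight A (i :: (l₁ ++ l₂)) := by
        rw [walkWeight_append hl₁, hw₁, hw₂]
    _ ≤ klStar A i ((l₁ ++ l₂).getLastD i) := walkWeight_le_klStar hA i _
    _ = klStar A i k := by rw [List.getLastD_append, hl₁, hl₂]

theorem le_klStar (hA : maxCycleMean A ≤ 1) (i j : Fin n) : A i j ≤ klStar A i j := by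
  simpa using walkWeight_le_klStar hA i [j]

theorem mul_klStar_le (hA : maxCycleMean A ≤ 1) (i j k : Fin n) :
    A i j * klStar A j k ≤ klStar A i k :=
  (mul_le_mul_left (le_klStar hA i j) _).trans (klStar_mul_klStar_le hA i j k)

theorem klStar_mul_le (hA : maxCycleMean A ≤ 1) (k i j : Fin n) :
    klStar A k i * A i j ≤ klStar A k j :=
  (mul_le_mul_right (le_klStar hA i j) _).trans (klStar_mul_klStar_le hA k i j)

theorem forall_mul_klStar_eq_iff (hA : maxCycleMean A ≤ 1) (i j : Fin n) :
    (∀ k, A i j * klStar A j k = klStar A i k) ↔ A i j * klStar A j i = 1 := by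
  refine ⟨fun h => (h i).trans (klStar_self hA i), fun h k => ?_⟩
  refine le_antisymm (mul_klStar_le hA i j k) ?_
  calc klStar A i k = A i j * (klStar A j i * klStar A i k) := by rw [← mul_assoc, h, one_mul]
    _ ≤ A i j * klStar A j k := by gcongr; exact klStar_mul_klStar_le hA j i k

theorem forall_klStar_eq_mul_iff (hA : maxCycleMean A ≤ 1) (i j : Fin n) :
    (∀ k, klStar A k j = klStar A k i * A i j) ↔ A i j * klStar A j i = 1 := by
  refine ⟨fun h => ?_, fun h k => ?_⟩
  · rw [mul_comm, ← h j, klStar_self hA j]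
  refine le_antisymm ?_ (klStar_mul_le hA k i j)
  calc klStar A k j = klStar A k j * klStar A j i * A i j := by
        rw [mul_assoc, mul_comm _ (A i j), h, mul_one]
    _ ≤ klStar A k i * A i j := by gcongr; exact klStar_mul_klStar_le hA k j i

theorem criticalEdge_iff (hA : maxCycleMean A = 1) (i j : Fin n) :
    criticalEdge A i j ↔ A i j * klStar A j i = 1 := by
  constructor
  · rintro ⟨l, hl, hmean, hmem⟩
    obtain ⟨t, hlast, hw⟩ := exists_cycleWeight_eq_mul_walkWeight (A := A) hmem
    refine le_antisymm ((mul_klStar_le hA.le i j i).trans_eq (klStar_self hA.le i)) ?_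
    calc 1 = cycleWeight A l := by rw [← cycleMean_rpow_length hl, hmean, hA, NNReal.one_rpow]
      _ = A i j * walkWeight A (j :: t) := hw
      _ ≤ A i j * klStar A j i := by gcongr; exact hlast ▸ walkWeight_le_klStar hA.le j t
  · intro h
    obtain ⟨t, hlast, hw⟩ := exists_walkWeight_eq_klStar (right_ne_zero_of_mul_eq_one h)
    obtain ⟨c, hc⟩ : ∃ c, j :: t = c ++ [i] := by
      obtain ⟨c, b, hcb⟩ := (j :: t).eq_nil_or_concat.resolve_left (List.cons_ne_nil j t)
      rw [List.concat_eq_append] at hcb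
      obtain rfl : b = i := by
        rw [← hlast, ← List.getLastD_cons (a := j), hcb, List.getLastD_concat]
      exact ⟨c, hcb⟩
    refine ⟨i :: c, List.cons_ne_nil i c, ?_, ?_⟩
    · rw [hA, cycleMean, cycleWeight_cons, ← hc, walkWeight_cons_cons, hw, h, NNReal.one_rpow]
    · rw [List.rotate_cons_succ, List.rotate_zero, ← hc, List.zip_cons_cons]
      exact List.mem_cons_self

end MaxTimes

/-- for definite `A`, `(i,j)` is critical iff
`a_ij a*_jk = a*_ik` for all `k`, iff `a*_kj = a*_ki a_ij` for all `k`. -/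
theorem stmt_11 {n : ℕ} (A : Matrix (Fin n) (Fin n) NNReal)
    (hdef : maxCycleMean A = 1) (i j : Fin n) :
    (criticalEdge A i j ↔ ∀ k, A i j * klStar A j k = klStar A i k) ∧
    (criticalEdge A i j ↔ ∀ k, klStar A k j = klStar A k i * A i j) := by
  rw [MaxTimes.forall_mul_klStar_eq_iff hdef.le, MaxTimes.forall_klStar_eq_mul_iff hdef.le]
  exact ⟨MaxTimes.criticalEdge_iff hdef i j, MaxTimes.criticalEdge_iff hdef i j⟩
end
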